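/- Let n ≥ 1 and |ω| ≤ π/(4(n+1)). Then for every integer k with 1 ≤ k ≤ 2n, we have k²cos(kω) − k·sin(kω)·cos(ω)/sin(ω) ≤ 0 and |k² − k·sin(kω)·cos(ω)/sin(ω)| ≤ k⁴ω²/2 (for ω ≠ 0). -/

import Mathlib

/-! The identity `sin ((k+1)θ) cos θ - (k+1) sin θ cos ((k+1)θ)
  = cos θ (sin (kθ) cos θ - k sin θ cos (kθ)) + (k+1) sin² θ sin (kθ)` shows by induction that
`k sin θ cos (kθ) ≤ sin (kθ) cos θ` while `kθ ≤ π`, i.e. `k² cos (kθ) ≤ k sin (kθ) cot θ`.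
Together with `|sin (kθ)| ≤ k |sin θ|` this squeezes `k sin (kθ) cot θ` between `k² cos (kθ)` and
`k²`, and `1 - cos x ≤ x² / 2` bounds the width of that interval by `k⁴ θ² / 2`. Both sides are even
in `ω`, and `k |ω| ≤ π / 2` throughout the range `k ≤ 2n`. -/

open Real

lemma abs_sin_nat_mul_le (k : ℕ) (θ : ℝ) : |sin (k * θ)| ≤ k * |sin θ| := by
  induction k with
  | zero => simp
  | succ k ih =>
    calc |sin ((k + 1 : ℕ) * θ)| = |sin (k * θ) * cos θ + cos (k * θ) * sin θ| := by
          push_cast; rw [add_one_mul, sin_add]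
      _ ≤ |sin (k * θ)| * |cos θ| + |cos (k * θ)| * |sin θ| := by
          simpa only [abs_mul] using abs_add_le (sin (k * θ) * cos θ) (cos (k * θ) * sin θ)
      _ ≤ |sin (k * θ)| * 1 + 1 * |sin θ| := by
          gcongr <;> exact abs_cos_le_one _
      _ ≤ (k + 1 : ℕ) * |sin θ| := by push_cast; linarith

lemma nat_mul_sin_mul_cos_nat_mul_le (k : ℕ) {θ : ℝ} (hθ₀ : 0 ≤ θ) (hθ : θ ≤ π / 2)
    (hkθ : k * θ ≤ π) : k * sin θ * cos (k * θ) ≤ sin (k * θ) * cos θ := by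
  induction k with
  | zero => simp
  | succ k ih =>
    push_cast at hkθ ⊢
    have hkθ' : k * θ ≤ π := by linarith
    have hsin_kθ : 0 ≤ sin (k * θ) := sin_nonneg_of_nonneg_of_le_pi (by positivity) hkθ'
    have hcos : 0 ≤ cos θ := cos_nonneg_of_mem_Icc ⟨by linarith [pi_pos], hθ⟩
    have hstep : sin ((k + 1) * θ) * cos θ - (k + 1) * sin θ * cos ((k + 1) * θ)
        = cos θ * (sin (k * θ) * cos θ - k * sin θ * cos (k * θ))
          + (k + 1) * sin θ ^ 2 * sin (k * θ) := by
      rw [add_one_mul, sin_add, cos_add]; ring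
    have := mul_nonneg hcos (sub_nonneg.2 (ih hkθ'))
    have : 0 ≤ (k + 1) * sin θ ^ 2 * sin (k * θ) := by positivity
    linarith

lemma nat_mul_sin_nat_mul_mul_cos_div_sin_le_sq (k : ℕ) {θ : ℝ} (hθ : 0 < sin θ) :
    k * sin (k * θ) * cos θ / sin θ ≤ (k : ℝ) ^ 2 := by
  rw [div_le_iff₀ hθ]
  calc k * sin (k * θ) * cos θ ≤ k * (|sin (k * θ)| * |cos θ|) := by
        rw [mul_assoc, ← abs_mul]; gcongr; exact le_abs_self _
    _ ≤ k * (k * |sin θ| * 1) := by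
        gcongr
        · exact abs_sin_nat_mul_le k θ
        · exact abs_cos_le_one θ
    _ = (k : ℝ) ^ 2 * sin θ := by rw [abs_of_pos hθ]; ring

lemma sq_mul_cos_nat_mul_le (k : ℕ) {θ : ℝ} (hθ₀ : 0 < θ) (hθ : θ ≤ π / 2) (hkθ : k * θ ≤ π) :
    (k : ℝ) ^ 2 * cos (k * θ) ≤ k * sin (k * θ) * cos θ / sin θ := by
  have hsin : 0 < sin θ := sin_pos_of_pos_of_lt_pi hθ₀ (by linarith [pi_pos])
  rw [le_div_iff₀ hsin]
  have := mul_le_mul_of_nonneg_left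
    (nat_mul_sin_mul_cos_nat_mul_le k hθ₀.le hθ hkθ) (Nat.cast_nonneg (α := ℝ) k)
  linarith

lemma small_omega_estimates_of_pos {k : ℕ} (hk : 1 ≤ k) {θ : ℝ} (hθ₀ : 0 < θ)
    (hkθ : k * θ ≤ π / 2) :
    (k : ℝ) ^ 2 * cos (k * θ) - k * sin (k * θ) * cos θ / sin θ ≤ 0 ∧
    |(k : ℝ) ^ 2 - k * sin (k * θ) * cos θ / sin θ| ≤ k ^ 4 * θ ^ 2 / 2 := by
  have hk' : (1 : ℝ) ≤ k := by exact_mod_cast hk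
  have hθ : θ ≤ π / 2 := by nlinarith
  have hsin : 0 < sin θ := sin_pos_of_pos_of_lt_pi hθ₀ (by linarith [pi_pos])
  have hlower := sq_mul_cos_nat_mul_le k hθ₀ hθ (by linarith [pi_pos])
  have hupper := nat_mul_sin_nat_mul_mul_cos_div_sin_le_sq k (θ := θ) hsin
  have hcos : 1 - (k * θ) ^ 2 / 2 ≤ cos (k * θ) := one_sub_sq_div_two_le_cos
  refine ⟨by linarith, abs_le.2 ⟨?_, ?_⟩⟩
  · have : 0 ≤ (k : ℝ) ^ 4 * θ ^ 2 / 2 := by positivity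
    linarith
  · have := mul_le_mul_of_nonneg_left hcos (sq_nonneg (k : ℝ))
    nlinarith

theorem small_omega_estimates_general (n : ℕ) (ω : ℝ) (hω0 : ω ≠ 0)
    (hω : |ω| ≤ Real.pi / (4 * (n + 1))) (k : ℕ) (hk1 : 1 ≤ k) (hk2 : k ≤ 2 * n) :
    (k : ℝ) ^ 2 * Real.cos (k * ω) - k * Real.sin (k * ω) * Real.cos ω / Real.sin ω ≤ 0 ∧
    |(k : ℝ) ^ 2 - k * Real.sin (k * ω) * Real.cos ω / Real.sin ω| ≤ k ^ 4 * ω ^ 2 / 2 := by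
  have hkω : k * |ω| ≤ π / 2 := by
    have hk : (k : ℝ) ≤ 2 * n := by exact_mod_cast hk2
    calc k * |ω| ≤ 2 * n * (π / (4 * (n + 1))) := by gcongr
      _ = π / 2 * (n / (n + 1)) := by field_simp; ring
      _ ≤ π / 2 := mul_le_of_le_one_right (by positivity)
            ((div_le_one (by positivity)).2 (by linarith))
  have h := small_omega_estimates_of_pos hk1 (abs_pos.2 hω0) hkω
  rcases abs_choice ω with hω' | hω' <;> rw [hω'] at h
  · exact h
  · simpa only [mul_neg, sin_neg, cos_neg, neg_mul, neg_div_neg_eq, neg_sq] using h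

theorem small_omega_estimates (n : ℕ) (hn : 1 ≤ n) (ω : ℝ) (hω0 : ω ≠ 0)
    (hω : |ω| ≤ Real.pi / (4 * (n + 1))) (k : ℕ) (hk1 : 1 ≤ k) (hk2 : k ≤ 2 * n) :
    (k : ℝ) ^ 2 * Real.cos (k * ω) - k * Real.sin (k * ω) * Real.cos ω / Real.sin ω ≤ 0 ∧
    |(k : ℝ) ^ 2 - k * Real.sin (k * ω) * Real.cos ω / Real.sin ω| ≤ k ^ 4 * ω ^ 2 / 2 :=
  small_omega_estimates_general n ω hω0 hω k hk1 hk2
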